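/- Let α₁,…,α₄, β₁,…,β₄ ∈ ℂ with the quartic polynomial q(λ) = α₁λ⁴ + (α₂−β₁)λ³ + (α₃−β₂)λ² + (α₄−β₃)λ − β₄ having four distinct roots and α₁ ≠ 0. Then the points (λ, 1, −1, −1/λ, 0, 0, 0, 0, 0) ∈ ℙ(2⁴,3⁴,4) for λ a root of q are exactly four distinct points, each satisfying the determinantal rank ≤ 1 condition for the matrix [[y₁,y₂,z₁],[y₃,y₄,z₂],[z₃,z₄,t]] and fixed by the involution (y₁,y₂,y₃,y₄,z₁,z₂,z₃,z₄,t) ↦ (−y₁,y₃,y₂,−y₄,−z₃,z₄,−z₁,z₂,−t). -/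

import Mathlib

open Polynomial

noncomputable section

/-- The weights of the coordinates `(y₁,…,y₄,z₁,…,z₄,t)` of `ℙ(2⁴,3⁴,4)`. -/
def wts : Fin 9 → ℕ := ![2, 2, 2, 2, 3, 3, 3, 3, 4]

/-- Two coordinate vectors represent the same point of `ℙ(2⁴,3⁴,4)` iff one is
a weighted scalar multiple of the other (`μ²` on `y`'s, `μ³` on `z`'s, `μ⁴` on `t`). -/
def wEq (p p' : Fin 9 → ℂ) : Prop :=
  ∃ μ : ℂ, μ ≠ 0 ∧ ∀ j, p' j = μ ^ (wts j) * p j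

/-- The point `(λ, 1, −1, −1/λ, 0, 0, 0, 0, 0)`. -/
def ptLam (l : ℂ) : Fin 9 → ℂ := ![l, 1, -1, -1 / l, 0, 0, 0, 0, 0]

/-- The involution `(y₁,y₂,y₃,y₄,z₁,z₂,z₃,z₄,t) ↦ (−y₁,y₃,y₂,−y₄,−z₃,z₄,−z₁,z₂,−t)`
acting on coordinate vectors. -/
def sigmaPt (p : Fin 9 → ℂ) : Fin 9 → ℂ :=
  ![-p 0, p 2, p 1, -p 3, -p 6, p 7, -p 4, p 5, -p 8]

/-- The determinantal matrix `[[y₁,y₂,z₁],[y₃,y₄,z₂],[z₃,z₄,t]]` at a point. -/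
def Npt (p : Fin 9 → ℂ) : Matrix (Fin 3) (Fin 3) ℂ :=
  !![p 0, p 1, p 4;
     p 2, p 3, p 5;
     p 6, p 7, p 8]

lemma vecMulVec_sub_vecMulVec_eq_zero {R : Type*} [CommRing R] {m n : Type*}
    (u : m → R) (v : n → R) (i j : m) (k l : n) :
    Matrix.vecMulVec u v i k * Matrix.vecMulVec u v j l
      - Matrix.vecMulVec u v i l * Matrix.vecMulVec u v j k = 0 := by
  simp only [Matrix.vecMulVec_apply]
  ring

lemma Npt_ptLam_eq_vecMulVec {l : ℂ} (hl : l ≠ 0) :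
    Npt (ptLam l) = Matrix.vecMulVec ![l, -1, 0] ![1, l⁻¹, 0] := by
  ext i k
  fin_cases i <;> fin_cases k <;> simp [Npt, ptLam, Matrix.vecMulVec_apply, hl, neg_div]

lemma eq_of_wEq_ptLam {l l' : ℂ} (h : wEq (ptLam l) (ptLam l')) : l = l' := by
  obtain ⟨μ, -, hμ⟩ := h
  have hμ₂ : μ ^ 2 = 1 := by simpa [ptLam, wts] using (hμ 1).symm
  simpa [ptLam, wts, hμ₂] using (hμ 0).symm

-- `μ = i` acts by `-1` on the `y`'s, which is exactly how `σ` moves `ptLam l`.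
lemma wEq_ptLam_sigmaPt (l : ℂ) : wEq (ptLam l) (sigmaPt (ptLam l)) := by
  refine ⟨Complex.I, Complex.I_ne_zero, fun j => ?_⟩
  fin_cases j <;> simp [ptLam, sigmaPt, wts, neg_div]

theorem stmt18_general (α₁ α₂ α₃ α₄ β₁ β₂ β₃ β₄ : ℂ)
    (q : Polynomial ℂ)
    (hq : q = C α₁ * X ^ 4 + C (α₂ - β₁) * X ^ 3 + C (α₃ - β₂) * X ^ 2
      + C (α₄ - β₃) * X - C β₄)
    (hβ₄ : β₄ ≠ 0) :
    (∀ l l' : ℂ, q.eval l = 0 → q.eval l' = 0 → wEq (ptLam l) (ptLam l') → l = l') ∧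
    (∀ l : ℂ, q.eval l = 0 → ∀ i j k m : Fin 3,
      Npt (ptLam l) i k * Npt (ptLam l) j m
        - Npt (ptLam l) i m * Npt (ptLam l) j k = 0) ∧
    (∀ l : ℂ, q.eval l = 0 → wEq (ptLam l) (sigmaPt (ptLam l))) := by
  have hroot_ne_zero : ∀ l : ℂ, q.eval l = 0 → l ≠ 0 := by
    rintro l hl rfl
    simp [hq, hβ₄] at hl
  refine ⟨fun l l' _ _ => eq_of_wEq_ptLam, fun l hl i j k m => ?_,
    fun l _ => wEq_ptLam_sigmaPt l⟩
  rw [Npt_ptLam_eq_vecMulVec (hroot_ne_zero l hl)]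
  exact vecMulVec_sub_vecMulVec_eq_zero _ _ i j k m

/-- for the quartic
`q(λ) = α₁λ⁴ + (α₂−β₁)λ³ + (α₃−β₂)λ² + (α₄−β₃)λ − β₄` with four distinct
roots, `α₁ ≠ 0` (and `β₄ ≠ 0`, ensuring `λ ≠ 0`), the points
`(λ, 1, −1, −1/λ, 0,…,0)` for `λ` a root of `q` are exactly four distinct
points of `ℙ(2⁴,3⁴,4)`, each satisfying the determinantal rank ≤ 1 condition
and fixed by the involution `σ`. -/
theorem stmt18 (α₁ α₂ α₃ α₄ β₁ β₂ β₃ β₄ : ℂ)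
    (q : Polynomial ℂ)
    (hq : q = C α₁ * X ^ 4 + C (α₂ - β₁) * X ^ 3 + C (α₃ - β₂) * X ^ 2
      + C (α₄ - β₃) * X - C β₄)
    (hα₁ : α₁ ≠ 0) (hβ₄ : β₄ ≠ 0)
    (hdistinct : q.roots.toFinset.card = 4) :
    (∀ l l' : ℂ, q.eval l = 0 → q.eval l' = 0 → wEq (ptLam l) (ptLam l') → l = l') ∧
    (∀ l : ℂ, q.eval l = 0 → ∀ i j k m : Fin 3,
      Npt (ptLam l) i k * Npt (ptLam l) j m
        - Npt (ptLam l) i m * Npt (ptLam l) j k = 0) ∧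
    (∀ l : ℂ, q.eval l = 0 → wEq (ptLam l) (sigmaPt (ptLam l))) :=
  stmt18_general α₁ α₂ α₃ α₄ β₁ β₂ β₃ β₄ q hq hβ₄

end
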